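/- Let K be an A-field and let Φ (dimension d), Ψ (dimension e) and ζ (dimension f) be t-modules over K with Hom_τ(Ψ,ζ) = 0. Let δ_t = U·Φ_t − Ψ_t·U for some U ∈ Mat_{e×d}(K{τ}) (a split biderivation in Der(Φ,Ψ)), and let Υ be the (d+e)-dimensional t-module with block matrix Υ_t = [[Φ_t, 0],[δ_t, Ψ_t]]. Writing a biderivation from Υ to ζ as a block row (δ₁ | δ₂) with δ₁ ∈ Mat_{f×d}(K{τ}) and δ₂ ∈ Mat_{f×e}(K{τ}), the maps i : Ext^1_τ(Φ,ζ) → Ext^1_τ(Υ,ζ), [δ₁] ↦ [(−δ₁ | 0)], and π : Ext^1_τ(Υ,ζ) → Ext^1_τ(Ψ,ζ), [(δ₁ | δ₂)] ↦ [−δ₂], are well-defined 𝔽_q[t]-module homomorphisms forming a short exact sequence 0 → Ext^1_τ(Φ,ζ) → Ext^1_τ(Υ,ζ) → Ext^1_τ(Ψ,ζ) → 0, and this sequence splits: the assignment [δ₂] ↦ [(δ₂·U | −δ₂)] is a well-defined 𝔽_q[t]-module homomorphism g with π∘g = id. -/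

import Mathlib

open Polynomial Matrix Finset

noncomputable section

/-- Twisted ("skew") multiplication of polynomials in `τ`, determined by the rule
`τ · c = c^q · τ`:  `(Σᵢ aᵢτ^i) · (Σⱼ bⱼτ^j) = Σ_{i,j} aᵢ bⱼ^(q^i) τ^(i+j)`. -/
def twMul {K : Type*} [Field K] (q : ℕ) (f g : Polynomial K) : Polynomial K :=
  f.sum fun i a => g.sum fun j b => Polynomial.C (a * b ^ q ^ i) * Polynomial.X ^ (i + j)

/-- Twisted multiplication of matrices over the twisted polynomial ring `K{τ}`. -/
def twMatMul {K : Type*} [Field K] (q : ℕ) {α β γ : Type*} [Fintype β]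
    (A : Matrix α β (Polynomial K)) (B : Matrix β γ (Polynomial K)) :
    Matrix α γ (Polynomial K) :=
  Matrix.of fun i k => ∑ j, twMul q (A i j) (B j k)

/-- `ψ` is (the value at `t` of) a Drinfeld module of rank `r` over the `A`-field `(K, θ)`. -/
def IsDrinfeld {K : Type*} [Field K] (θ : K) (r : ℕ) (ψ : Polynomial K) : Prop :=
  1 ≤ r ∧ ψ.coeff 0 = θ ∧ ψ.natDegree = r ∧ ψ.coeff r ≠ 0

/-- `Υ` is (the value at `t` of) a triangular t-module of dimension `n` with diagonal
Drinfeld modules `ψ 0 = ψ₁, …, ψ (n-1) = ψₙ` of ranks `r 0, …, r (n-1)`:  `Υ` is lower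
triangular and its `(k,k)` diagonal entry is `ψ k.rev` (so `ψₙ` is top-left and
`ψ₁` is bottom-right). -/
def IsTriangular {K : Type*} [Field K] (θ : K) {n : ℕ}
    (Υ : Matrix (Fin n) (Fin n) (Polynomial K))
    (ψ : Fin n → Polynomial K) (r : Fin n → ℕ) : Prop :=
  (∀ i j : Fin n, i < j → Υ i j = 0) ∧
  (∀ k : Fin n, Υ k k = ψ k.rev) ∧
  (∀ i : Fin n, IsDrinfeld θ (r i) (ψ i))

/-- `Φt` is (the value at `t` of) a t-module: `∂Φ_t = θ·I + N` with `N` nilpotent. -/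
def IsTModule {K : Type*} [Field K] (θ : K) {ι : Type*} [Fintype ι] [DecidableEq ι]
    (Φt : Matrix ι ι (Polynomial K)) : Prop :=
  ∃ N : Matrix ι ι K, IsNilpotent N ∧
    (Matrix.of fun i j => (Φt i j).coeff 0) = θ • (1 : Matrix ι ι K) + N

/-- The inner biderivation `δ^{(V)} = V·X_t − ζ_t·V` from the t-module `X` to `ζ`. -/
def innerBi {K : Type*} [Field K] (q : ℕ) {α ι : Type*} [Fintype α] [Fintype ι]
    (Xt : Matrix α α (Polynomial K)) (ζt : Matrix ι ι (Polynomial K))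
    (V : Matrix ι α (Polynomial K)) : Matrix ι α (Polynomial K) :=
  twMatMul q V Xt - twMatMul q ζt V

/-- Two biderivations from `X` to `ζ` represent the same class in
`Ext¹_τ(X,ζ) = Der(X,ζ)/Der_in(X,ζ)`. -/
def ExtEq {K : Type*} [Field K] (q : ℕ) {α ι : Type*} [Fintype α] [Fintype ι]
    (Xt : Matrix α α (Polynomial K)) (ζt : Matrix ι ι (Polynomial K))
    (δ δ' : Matrix ι α (Polynomial K)) : Prop :=
  ∃ V : Matrix ι α (Polynomial K), δ - δ' = innerBi q Xt ζt V

/-!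
Writing biderivations and inner biderivations `δ^{(V)} = V·X_t − ζ_t·V` on `Υ` in block-column
form, the inner biderivation of `(V₁ | V₂)` is `(δ^{(V₁)} + V₂·δ_t | δ^{(V₂)})`. Each claim is a
computation with this block formula: the maps `i`, `π`, `g` send inner biderivations to inner
biderivations (for `g` because `δ^{(V·U)} = δ^{(V)}·U + V·δ_t` when `δ_t = U·Φ_t − Ψ_t·U`), and
they commute with left multiplication by `ζ_t` on the nose. For injectivity of `i`, the second
block of `(−δ₁ | 0) = δ^{(V₁ | V₂)}` says that `V₂ ∈ Hom_τ(Ψ, ζ) = 0`. Only the ring axioms of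
`K{τ}` enter, and these hold as soon as `x ↦ x^q` is additive.
-/

section TwistedPolynomial

variable {K : Type*} [Field K] {q : ℕ}

lemma twMul_add_left (f f' g : K[X]) : twMul q (f + f') g = twMul q f g + twMul q f' g := by
  refine Polynomial.sum_add_index f f' _ (fun i => by simp [Polynomial.sum]) fun i a a' => ?_
  simp only [add_mul, map_add, Polynomial.sum_add]

lemma twMul_zero_right (f : K[X]) : twMul q f 0 = 0 := by
  simp [twMul, Polynomial.sum]

variable (hq : ∀ x y : K, (x + y) ^ q = x ^ q + y ^ q)
include hq

lemma ne_zero_of_add_pow : q ≠ 0 := by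
  rintro rfl
  simpa using hq 0 0

lemma add_pow_pow_of_add_pow (n : ℕ) (x y : K) : (x + y) ^ q ^ n = x ^ q ^ n + y ^ q ^ n := by
  induction n with
  | zero => simp
  | succ n ih => rw [pow_succ, pow_mul, pow_mul, pow_mul, ih, hq]

lemma zero_pow_pow_of_add_pow (n : ℕ) : (0 : K) ^ q ^ n = 0 :=
  zero_pow (pow_ne_zero n (ne_zero_of_add_pow hq))

lemma twMul_add_right (f g g' : K[X]) : twMul q f (g + g') = twMul q f g + twMul q f g' := by
  rw [twMul, twMul, twMul, ← Polynomial.sum_add]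
  congr 1
  funext i a
  refine Polynomial.sum_add_index g g' _ (fun j => ?_) fun j b b' => ?_
  · simp [zero_pow_pow_of_add_pow hq]
  · rw [add_pow_pow_of_add_pow hq, mul_add, map_add, add_mul]

lemma twMul_monomial (i j : ℕ) (a b : K) :
    twMul q (monomial i a) (monomial j b) = monomial (i + j) (a * b ^ q ^ i) := by
  rw [twMul, Polynomial.sum_monomial_index, Polynomial.sum_monomial_index, C_mul_X_pow_eq_monomial]
  · simp [zero_pow_pow_of_add_pow hq]
  · simp [Polynomial.sum]

lemma twMul_assoc (f g h : K[X]) : twMul q (twMul q f g) h = twMul q f (twMul q g h) := by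
  induction f using Polynomial.induction_on' with
  | add f f' hf hf' => rw [twMul_add_left, twMul_add_left, twMul_add_left, hf, hf']
  | monomial i a =>
  induction g using Polynomial.induction_on' with
  | add g g' hg hg' => rw [twMul_add_right hq, twMul_add_left, twMul_add_left,
      twMul_add_right hq, hg, hg']
  | monomial j b =>
  induction h using Polynomial.induction_on' with
  | add h h' hh hh' => simp only [twMul_add_right hq, hh, hh']
  | monomial k c =>
    simp only [twMul_monomial hq, add_assoc, mul_pow, mul_assoc, ← pow_mul, pow_add,
      mul_comm (q ^ i)]

end TwistedPolynomial

section TwistedMatrix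

variable {K : Type*} [Field K] {q : ℕ} {α β γ δ : Type*} [Fintype β]

lemma twMatMul_add_left (A A' : Matrix α β K[X]) (B : Matrix β γ K[X]) :
    twMatMul q (A + A') B = twMatMul q A B + twMatMul q A' B := by
  ext i k
  simp [twMatMul, twMul_add_left, Finset.sum_add_distrib]

def twMatMulRight (B : Matrix β γ K[X]) : Matrix α β K[X] →+ Matrix α γ K[X] :=
  AddMonoidHom.mk' (fun A : Matrix α β K[X] => twMatMul q A B) (twMatMul_add_left · · B)

lemma twMatMul_zero_left (B : Matrix β γ K[X]) : twMatMul q (0 : Matrix α β K[X]) B = 0 :=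
  map_zero (twMatMulRight B)

lemma twMatMul_neg_left (A : Matrix α β K[X]) (B : Matrix β γ K[X]) :
    twMatMul q (-A) B = -twMatMul q A B :=
  map_neg (twMatMulRight B) A

lemma twMatMul_sub_left (A A' : Matrix α β K[X]) (B : Matrix β γ K[X]) :
    twMatMul q (A - A') B = twMatMul q A B - twMatMul q A' B :=
  map_sub (twMatMulRight B) A A'

lemma twMatMul_zero_right (A : Matrix α β K[X]) : twMatMul q A (0 : Matrix β γ K[X]) = 0 := by
  ext i k
  simp [twMatMul, twMul_zero_right]

lemma twMatMul_fromCols_right {β' : Type*} (Z : Matrix α β K[X]) (A : Matrix β γ K[X])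
    (B : Matrix β β' K[X]) :
    twMatMul q Z (fromCols A B) = fromCols (twMatMul q Z A) (twMatMul q Z B) := by
  ext i (j | j) <;> simp [twMatMul]

lemma twMatMul_fromCols_fromBlocks_zero {β' : Type*} [Fintype β']
    (A : Matrix α β K[X]) (B : Matrix α β' K[X]) (P : Matrix β β K[X])
    (D : Matrix β' β K[X]) (S : Matrix β' β' K[X]) :
    twMatMul q (fromCols A B) (fromBlocks P 0 D S) =
      fromCols (twMatMul q A P + twMatMul q B D) (twMatMul q B S) := by
  ext i (j | j) <;> simp [twMatMul, Fintype.sum_sum_type, twMul_zero_right]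

variable (hq : ∀ x y : K, (x + y) ^ q = x ^ q + y ^ q)
include hq

lemma twMatMul_add_right (A : Matrix α β K[X]) (B B' : Matrix β γ K[X]) :
    twMatMul q A (B + B') = twMatMul q A B + twMatMul q A B' := by
  ext i k
  simp [twMatMul, twMul_add_right hq, Finset.sum_add_distrib]

def twMatMulLeft (A : Matrix α β K[X]) : Matrix β γ K[X] →+ Matrix α γ K[X] :=
  AddMonoidHom.mk' (twMatMul q A) (twMatMul_add_right hq A)

lemma twMatMul_neg_right (A : Matrix α β K[X]) (B : Matrix β γ K[X]) :
    twMatMul q A (-B) = -twMatMul q A B :=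
  map_neg (twMatMulLeft hq A) B

lemma twMatMul_sub_right (A : Matrix α β K[X]) (B B' : Matrix β γ K[X]) :
    twMatMul q A (B - B') = twMatMul q A B - twMatMul q A B' :=
  map_sub (twMatMulLeft hq A) B B'

lemma twMatMul_assoc [Fintype γ] (A : Matrix α β K[X]) (B : Matrix β γ K[X])
    (C : Matrix γ δ K[X]) :
    twMatMul q (twMatMul q A B) C = twMatMul q A (twMatMul q B C) := by
  refine Matrix.ext fun i l => ?_
  have hsum_left (s : Finset β) (F : β → K[X]) (g : K[X]) :
      twMul q (∑ j ∈ s, F j) g = ∑ j ∈ s, twMul q (F j) g :=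
    map_sum (AddMonoidHom.mk' (fun f : K[X] => twMul q f g) (twMul_add_left · · g)) F s
  have hsum_right (s : Finset γ) (f : K[X]) (G : γ → K[X]) :
      twMul q f (∑ k ∈ s, G k) = ∑ k ∈ s, twMul q f (G k) :=
    map_sum (AddMonoidHom.mk' (twMul q f) (twMul_add_right hq f)) G s
  simp only [twMatMul, Matrix.of_apply, hsum_left, hsum_right, twMul_assoc hq]
  exact Finset.sum_comm

end TwistedMatrix

lemma Matrix.fromCols_sub_fromCols {R m n₁ n₂ : Type*} [Sub R] (A₁ B₁ : Matrix m n₁ R)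
    (A₂ B₂ : Matrix m n₂ R) :
    fromCols A₁ A₂ - fromCols B₁ B₂ = fromCols (A₁ - B₁) (A₂ - B₂) := by
  ext i (j | j) <;> rfl

section InnerBiderivation

variable {K : Type*} [Field K] {q : ℕ} {α β ι : Type*} [Fintype α] [Fintype β] [Fintype ι]

lemma innerBi_zero (Xt : Matrix α α K[X]) (ζt : Matrix ι ι K[X]) : innerBi q Xt ζt 0 = 0 := by
  rw [innerBi, twMatMul_zero_left, twMatMul_zero_right, sub_zero]

lemma innerBi_fromBlocks_fromCols (Φt : Matrix α α K[X]) (Ψt : Matrix β β K[X])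
    (δt : Matrix β α K[X]) (ζt : Matrix ι ι K[X]) (V₁ : Matrix ι α K[X])
    (V₂ : Matrix ι β K[X]) :
    innerBi q (fromBlocks Φt 0 δt Ψt) ζt (fromCols V₁ V₂) =
      fromCols (innerBi q Φt ζt V₁ + twMatMul q V₂ δt) (innerBi q Ψt ζt V₂) := by
  rw [innerBi, twMatMul_fromCols_fromBlocks_zero, twMatMul_fromCols_right,
    Matrix.fromCols_sub_fromCols, innerBi, innerBi, add_sub_right_comm]

variable (hq : ∀ x y : K, (x + y) ^ q = x ^ q + y ^ q)
include hq

lemma innerBi_neg (Xt : Matrix α α K[X]) (ζt : Matrix ι ι K[X]) (V : Matrix ι α K[X]) :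
    innerBi q Xt ζt (-V) = -innerBi q Xt ζt V := by
  rw [innerBi, innerBi, twMatMul_neg_left, twMatMul_neg_right hq, neg_sub_neg, neg_sub]

lemma innerBi_twMatMul (Φt : Matrix α α K[X]) (Ψt : Matrix β β K[X]) (ζt : Matrix ι ι K[X])
    (V : Matrix ι β K[X]) (U : Matrix β α K[X]) :
    innerBi q Φt ζt (twMatMul q V U) =
      twMatMul q (innerBi q Ψt ζt V) U + twMatMul q V (twMatMul q U Φt - twMatMul q Ψt U) := by
  rw [innerBi, innerBi, twMatMul_sub_left, twMatMul_sub_right hq, twMatMul_assoc hq,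
    twMatMul_assoc hq, twMatMul_assoc hq]
  abel

end InnerBiderivation

section Ext

variable {K : Type*} [Field K] {q : ℕ} {α β ι : Type*} [Fintype α] [Fintype β] [Fintype ι]

lemma ExtEq.of_eq {Xt : Matrix α α K[X]} {ζt : Matrix ι ι K[X]} {δ δ' : Matrix ι α K[X]}
    (h : δ = δ') : ExtEq q Xt ζt δ δ' :=
  ⟨0, by rw [h, sub_self, innerBi_zero]⟩

lemma ExtEq.map {α' ι' : Type*} [Fintype α'] [Fintype ι'] {Xt : Matrix α α K[X]}
    {ζt : Matrix ι ι K[X]} {Xt' : Matrix α' α' K[X]} {ζt' : Matrix ι' ι' K[X]}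
    (F : Matrix ι α K[X] → Matrix ι' α' K[X]) (hF : ∀ a b, F (a - b) = F a - F b)
    (hF_inner : ∀ V, ∃ W, F (innerBi q Xt ζt V) = innerBi q Xt' ζt' W)
    {δ δ' : Matrix ι α K[X]} (h : ExtEq q Xt ζt δ δ') : ExtEq q Xt' ζt' (F δ) (F δ') := by
  obtain ⟨V, hV⟩ := h
  obtain ⟨W, hW⟩ := hF_inner V
  exact ⟨W, by rw [← hF, hV, hW]⟩

variable {Φt : Matrix α α K[X]} {Ψt : Matrix β β K[X]} {ζt : Matrix ι ι K[X]}
  (hq : ∀ x y : K, (x + y) ^ q = x ^ q + y ^ q)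
include hq

lemma ExtEq.fromCols_neg_zero (δt : Matrix β α K[X]) {δ₁ δ₁' : Matrix ι α K[X]}
    (h : ExtEq q Φt ζt δ₁ δ₁') :
    ExtEq q (fromBlocks Φt 0 δt Ψt) ζt (fromCols (-δ₁) 0) (fromCols (-δ₁') 0) := by
  refine h.map (fun δ => fromCols (-δ) 0) (fun a b => ?_) fun V => ⟨fromCols (-V) 0, ?_⟩
  · rw [Matrix.fromCols_sub_fromCols, sub_zero, neg_sub']
  · rw [innerBi_fromBlocks_fromCols, twMatMul_zero_left, add_zero, innerBi_zero,
      innerBi_neg hq]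

lemma ExtEq.neg_toCols₂ {δt : Matrix β α K[X]} {η η' : Matrix ι (α ⊕ β) K[X]}
    (h : ExtEq q (fromBlocks Φt 0 δt Ψt) ζt η η') :
    ExtEq q Ψt ζt (-η.toCols₂) (-η'.toCols₂) := by
  refine h.map (fun η => -η.toCols₂) (fun a b => neg_sub' _ _) fun V => ⟨-V.toCols₂, ?_⟩
  obtain ⟨V₁, V₂, rfl⟩ : ∃ V₁ V₂, V = fromCols V₁ V₂ := ⟨_, _, (fromCols_toCols V).symm⟩
  rw [innerBi_fromBlocks_fromCols, toCols₂_fromCols, toCols₂_fromCols, innerBi_neg hq]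

lemma ExtEq.fromCols_twMatMul_neg (U : Matrix β α K[X]) {δ₂ δ₂' : Matrix ι β K[X]}
    (h : ExtEq q Ψt ζt δ₂ δ₂') :
    ExtEq q (fromBlocks Φt 0 (twMatMul q U Φt - twMatMul q Ψt U) Ψt) ζt
      (fromCols (twMatMul q δ₂ U) (-δ₂)) (fromCols (twMatMul q δ₂' U) (-δ₂')) := by
  refine h.map (fun δ => fromCols (twMatMul q δ U) (-δ)) (fun a b => ?_)
    fun V => ⟨fromCols (twMatMul q V U) (-V), ?_⟩
  · rw [twMatMul_sub_left, neg_sub', Matrix.fromCols_sub_fromCols]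
  · rw [innerBi_fromBlocks_fromCols, innerBi_twMatMul hq _ Ψt, innerBi_neg hq,
      twMatMul_neg_left, add_neg_cancel_right]

lemma extEq_zero_of_extEq_fromCols_neg_zero
    (hhom : ∀ F : Matrix ι β K[X], twMatMul q F Ψt = twMatMul q ζt F → F = 0)
    (δt : Matrix β α K[X]) {δ₁ : Matrix ι α K[X]}
    (h : ExtEq q (fromBlocks Φt 0 δt Ψt) ζt (fromCols (-δ₁) 0) 0) : ExtEq q Φt ζt δ₁ 0 := by
  obtain ⟨V, hV⟩ := h
  obtain ⟨V₁, V₂, rfl⟩ : ∃ V₁ V₂, V = fromCols V₁ V₂ := ⟨_, _, (fromCols_toCols V).symm⟩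
  rw [sub_zero, innerBi_fromBlocks_fromCols, fromCols_inj.eq_iff] at hV
  have hV₂ : V₂ = 0 := hhom V₂ (sub_eq_zero.mp hV.2.symm)
  rw [hV₂, twMatMul_zero_left, add_zero] at hV
  exact ⟨-V₁, by rw [sub_zero, innerBi_neg hq, ← hV.1, neg_neg]⟩

lemma exists_extEq_fromCols_neg_zero (δt : Matrix β α K[X]) {η : Matrix ι (α ⊕ β) K[X]}
    (h : ExtEq q Ψt ζt (-η.toCols₂) 0) :
    ∃ δ₁, ExtEq q (fromBlocks Φt 0 δt Ψt) ζt η (fromCols (-δ₁) 0) := by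
  obtain ⟨V, hV⟩ := h
  rw [sub_zero] at hV
  refine ⟨twMatMul q (-V) δt - η.toCols₁, fromCols 0 (-V), ?_⟩
  rw [innerBi_fromBlocks_fromCols, innerBi_zero, zero_add, innerBi_neg hq, ← hV, neg_neg,
    neg_sub, ← fromCols_toCols η, Matrix.fromCols_sub_fromCols, toCols₁_fromCols,
    toCols₂_fromCols, sub_zero, sub_sub_cancel]

end Ext

theorem split_ext_sequence_general
    {K : Type*} [Field K] (p s q : ℕ) [Fact p.Prime] (hq : q = p ^ s)
    [Algebra (GaloisField p s) K] {d e f : ℕ}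
    (Φt : Matrix (Fin d) (Fin d) (Polynomial K))
    (Ψt : Matrix (Fin e) (Fin e) (Polynomial K))
    (ζt : Matrix (Fin f) (Fin f) (Polynomial K))
    (hhom : ∀ F : Matrix (Fin f) (Fin e) (Polynomial K),
      twMatMul q F Ψt = twMatMul q ζt F → F = 0)
    (U₀ δt : Matrix (Fin e) (Fin d) (Polynomial K))
    (hδ : δt = twMatMul q U₀ Φt - twMatMul q Ψt U₀)
    (Υt : Matrix (Fin d ⊕ Fin e) (Fin d ⊕ Fin e) (Polynomial K))
    (hΥ : Υt = Matrix.fromBlocks Φt 0 δt Ψt) :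
    -- `i` is well defined
    (∀ δ₁ δ₁' : Matrix (Fin f) (Fin d) (Polynomial K),
      ExtEq q Φt ζt δ₁ δ₁' →
      ExtEq q Υt ζt (Matrix.fromCols (-δ₁) 0) (Matrix.fromCols (-δ₁') 0)) ∧
    -- `i` commutes with the action of `t`
    (∀ δ₁ : Matrix (Fin f) (Fin d) (Polynomial K),
      ExtEq q Υt ζt (Matrix.fromCols (-(twMatMul q ζt δ₁)) 0)
        (twMatMul q ζt (Matrix.fromCols (-δ₁) 0))) ∧
    -- `π` is well defined
    (∀ η η' : Matrix (Fin f) (Fin d ⊕ Fin e) (Polynomial K),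
      ExtEq q Υt ζt η η' →
      ExtEq q Ψt ζt (-(Matrix.of fun i j => η i (Sum.inr j)))
        (-(Matrix.of fun i j => η' i (Sum.inr j)))) ∧
    -- `π` commutes with the action of `t`
    (∀ η : Matrix (Fin f) (Fin d ⊕ Fin e) (Polynomial K),
      ExtEq q Ψt ζt (-(Matrix.of fun i j => twMatMul q ζt η i (Sum.inr j)))
        (twMatMul q ζt (-(Matrix.of fun i j => η i (Sum.inr j))))) ∧
    -- `i` is injective
    (∀ δ₁ : Matrix (Fin f) (Fin d) (Polynomial K),
      ExtEq q Υt ζt (Matrix.fromCols (-δ₁) 0) 0 → ExtEq q Φt ζt δ₁ 0) ∧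
    -- exactness in the middle:  `ker π ⊆ im i`  (the inclusion `im i ⊆ ker π` being
    -- immediate since the second block of `(−δ₁|0)` is `0`)
    (∀ η : Matrix (Fin f) (Fin d ⊕ Fin e) (Polynomial K),
      ExtEq q Ψt ζt (-(Matrix.of fun i j => η i (Sum.inr j))) 0 →
      ∃ δ₁ : Matrix (Fin f) (Fin d) (Polynomial K),
        ExtEq q Υt ζt η (Matrix.fromCols (-δ₁) 0)) ∧
    -- `π` is surjective
    (∀ δ₂ : Matrix (Fin f) (Fin e) (Polynomial K),
      ∃ η : Matrix (Fin f) (Fin d ⊕ Fin e) (Polynomial K),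
        ExtEq q Ψt ζt (-(Matrix.of fun i j => η i (Sum.inr j))) δ₂) ∧
    -- the section `g` is well defined
    (∀ δ₂ δ₂' : Matrix (Fin f) (Fin e) (Polynomial K),
      ExtEq q Ψt ζt δ₂ δ₂' →
      ExtEq q Υt ζt (Matrix.fromCols (twMatMul q δ₂ U₀) (-δ₂))
        (Matrix.fromCols (twMatMul q δ₂' U₀) (-δ₂'))) ∧
    -- `g` commutes with the action of `t`
    (∀ δ₂ : Matrix (Fin f) (Fin e) (Polynomial K),
      ExtEq q Υt ζt
        (Matrix.fromCols (twMatMul q (twMatMul q ζt δ₂) U₀) (-(twMatMul q ζt δ₂)))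
        (twMatMul q ζt (Matrix.fromCols (twMatMul q δ₂ U₀) (-δ₂)))) ∧
    -- `π ∘ g = id`
    (∀ δ₂ : Matrix (Fin f) (Fin e) (Polynomial K),
      ExtEq q Ψt ζt
        (-(Matrix.of fun i j =>
          (Matrix.fromCols (twMatMul q δ₂ U₀) (-δ₂)) i (Sum.inr j))) δ₂) := by
  subst hq hΥ hδ
  have : CharP K p := charP_of_injective_algebraMap (algebraMap (GaloisField p s) K).injective p
  have hfrob : ∀ x y : K, (x + y) ^ p ^ s = x ^ p ^ s + y ^ p ^ s :=
    fun x y => add_pow_char_pow x y p s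
  have hπ_fromCols (δ₂ : Matrix (Fin f) (Fin e) K[X]) (A : Matrix (Fin f) (Fin d) K[X]) :
      ExtEq (p ^ s) Ψt ζt (-(fromCols A (-δ₂)).toCols₂) δ₂ :=
    ExtEq.of_eq (by rw [toCols₂_fromCols, neg_neg])
  refine ⟨?_, ?_, ?_, ?_, ?_, ?_, ?_, ?_, ?_, ?_⟩
  · exact fun _ _ => ExtEq.fromCols_neg_zero hfrob _
  · exact fun δ₁ => ExtEq.of_eq (by
      rw [twMatMul_fromCols_right, twMatMul_neg_right hfrob, twMatMul_zero_right])
  · exact fun _ _ => ExtEq.neg_toCols₂ hfrob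
  · exact fun η => ExtEq.of_eq (by rw [twMatMul_neg_right hfrob]; rfl)
  · exact fun _ => extEq_zero_of_extEq_fromCols_neg_zero hfrob hhom _
  · exact fun _ => exists_extEq_fromCols_neg_zero hfrob _
  · exact fun δ₂ => ⟨fromCols 0 (-δ₂), hπ_fromCols δ₂ 0⟩
  · exact fun _ _ => ExtEq.fromCols_twMatMul_neg hfrob U₀
  · exact fun δ₂ => ExtEq.of_eq (by
      rw [twMatMul_fromCols_right, twMatMul_assoc hfrob, twMatMul_neg_right hfrob])
  · exact fun δ₂ => hπ_fromCols δ₂ _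

/-- the split short exact sequence of Ext groups associated with a
split extension.  Let `Φ, Ψ, ζ` be t-modules with `Hom_τ(Ψ,ζ) = 0`, let
`δ_t = U₀·Φ_t − Ψ_t·U₀` be a split biderivation and `Υ_t = [[Φ_t,0],[δ_t,Ψ_t]]`.
Writing biderivations `Υ → ζ` as block rows `(δ₁ | δ₂)`, the maps
`i : [δ₁] ↦ [(−δ₁|0)]` and `π : [(δ₁|δ₂)] ↦ [−δ₂]` are well defined
`𝔽_q[t]`-equivariant maps forming a short exact sequence
`0 → Ext¹_τ(Φ,ζ) → Ext¹_τ(Υ,ζ) → Ext¹_τ(Ψ,ζ) → 0`, which splits via the well defined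
`𝔽_q[t]`-equivariant section `g : [δ₂] ↦ [(δ₂·U₀ | −δ₂)]` satisfying `π ∘ g = id`. -/
theorem split_ext_sequence
    {K : Type*} [Field K] (p s q : ℕ) [Fact p.Prime] (hs : 0 < s) (hq : q = p ^ s)
    [Algebra (GaloisField p s) K] (θ : K) {d e f : ℕ}
    (Φt : Matrix (Fin d) (Fin d) (Polynomial K))
    (Ψt : Matrix (Fin e) (Fin e) (Polynomial K))
    (ζt : Matrix (Fin f) (Fin f) (Polynomial K))
    (hΦ : IsTModule θ Φt) (hΨ : IsTModule θ Ψt) (hζ : IsTModule θ ζt)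
    (hhom : ∀ F : Matrix (Fin f) (Fin e) (Polynomial K),
      twMatMul q F Ψt = twMatMul q ζt F → F = 0)
    (U₀ δt : Matrix (Fin e) (Fin d) (Polynomial K))
    (hδ : δt = twMatMul q U₀ Φt - twMatMul q Ψt U₀)
    (Υt : Matrix (Fin d ⊕ Fin e) (Fin d ⊕ Fin e) (Polynomial K))
    (hΥ : Υt = Matrix.fromBlocks Φt 0 δt Ψt) :
    -- `i` is well defined
    (∀ δ₁ δ₁' : Matrix (Fin f) (Fin d) (Polynomial K),
      ExtEq q Φt ζt δ₁ δ₁' →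
      ExtEq q Υt ζt (Matrix.fromCols (-δ₁) 0) (Matrix.fromCols (-δ₁') 0)) ∧
    -- `i` commutes with the action of `t`
    (∀ δ₁ : Matrix (Fin f) (Fin d) (Polynomial K),
      ExtEq q Υt ζt (Matrix.fromCols (-(twMatMul q ζt δ₁)) 0)
        (twMatMul q ζt (Matrix.fromCols (-δ₁) 0))) ∧
    -- `π` is well defined
    (∀ η η' : Matrix (Fin f) (Fin d ⊕ Fin e) (Polynomial K),
      ExtEq q Υt ζt η η' →
      ExtEq q Ψt ζt (-(Matrix.of fun i j => η i (Sum.inr j)))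
        (-(Matrix.of fun i j => η' i (Sum.inr j)))) ∧
    -- `π` commutes with the action of `t`
    (∀ η : Matrix (Fin f) (Fin d ⊕ Fin e) (Polynomial K),
      ExtEq q Ψt ζt (-(Matrix.of fun i j => twMatMul q ζt η i (Sum.inr j)))
        (twMatMul q ζt (-(Matrix.of fun i j => η i (Sum.inr j))))) ∧
    -- `i` is injective
    (∀ δ₁ : Matrix (Fin f) (Fin d) (Polynomial K),
      ExtEq q Υt ζt (Matrix.fromCols (-δ₁) 0) 0 → ExtEq q Φt ζt δ₁ 0) ∧
    -- exactness in the middle:  `ker π ⊆ im i`  (the inclusion `im i ⊆ ker π` being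
    -- immediate since the second block of `(−δ₁|0)` is `0`)
    (∀ η : Matrix (Fin f) (Fin d ⊕ Fin e) (Polynomial K),
      ExtEq q Ψt ζt (-(Matrix.of fun i j => η i (Sum.inr j))) 0 →
      ∃ δ₁ : Matrix (Fin f) (Fin d) (Polynomial K),
        ExtEq q Υt ζt η (Matrix.fromCols (-δ₁) 0)) ∧
    -- `π` is surjective
    (∀ δ₂ : Matrix (Fin f) (Fin e) (Polynomial K),
      ∃ η : Matrix (Fin f) (Fin d ⊕ Fin e) (Polynomial K),
        ExtEq q Ψt ζt (-(Matrix.of fun i j => η i (Sum.inr j))) δ₂) ∧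
    -- the section `g` is well defined
    (∀ δ₂ δ₂' : Matrix (Fin f) (Fin e) (Polynomial K),
      ExtEq q Ψt ζt δ₂ δ₂' →
      ExtEq q Υt ζt (Matrix.fromCols (twMatMul q δ₂ U₀) (-δ₂))
        (Matrix.fromCols (twMatMul q δ₂' U₀) (-δ₂'))) ∧
    -- `g` commutes with the action of `t`
    (∀ δ₂ : Matrix (Fin f) (Fin e) (Polynomial K),
      ExtEq q Υt ζt
        (Matrix.fromCols (twMatMul q (twMatMul q ζt δ₂) U₀) (-(twMatMul q ζt δ₂)))
        (twMatMul q ζt (Matrix.fromCols (twMatMul q δ₂ U₀) (-δ₂)))) ∧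
    -- `π ∘ g = id`
    (∀ δ₂ : Matrix (Fin f) (Fin e) (Polynomial K),
      ExtEq q Ψt ζt
        (-(Matrix.of fun i j =>
          (Matrix.fromCols (twMatMul q δ₂ U₀) (-δ₂)) i (Sum.inr j))) δ₂) :=
  split_ext_sequence_general p s q hq Φt Ψt ζt hhom U₀ δt hδ Υt hΥ
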